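/- arXiv:1807.05790 — 3 statements merged into one kernel-verified Lean document; each statement's English description precedes it below -/
import Mathlib

section
/- Let D ≥ 1 be a natural number and σ > 0 a real number. Then the integral over the open unit disk in ℂ of (|z|^{2/D − 2} / (π·D)) · log|σ^D·z − 1| with respect to two-dimensional Lebesgue measure equals 0 if σ ≤ 1, and equals D·(log σ + (1/σ² − 1)/2) if σ > 1. -/
/-!
In polar coordinates `z = r e^{iθ}` the weight `‖z‖^(α-2)` is radial, so the integral over the
disc reduces to `2π ∫₀¹ r^(α-1) · circleAverage (log ‖a · - 1‖) 0 r dr`. By Jensen's formula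
the circle average of `log ‖z - 1‖` over the circle of radius `R` is `log⁺ R`, leaving the
elementary integral `∫₀¹ r^(α-1) log⁺ (a r) dr`, which vanishes for `a ≤ 1` and is computed from
the antiderivative `r^α/α · (log (a r) - 1/α)` on `[1/a, 1]` for `a > 1`. The theorem is the case
`α = 2/D`, `a = σ^D`.
-/

open MeasureTheory Real Set Metric

section CircleAverage

variable {E : Type*} [NormedAddCommGroup E]

theorem ofReal_mul_circleMap_zero (a R θ : ℝ) :
    (a : ℂ) * circleMap 0 R θ = circleMap 0 (a * R) θ := by
  simp only [circleMap_zero, Complex.ofReal_mul, mul_assoc]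

theorem CircleIntegrable.integrableOn_Ioo_neg_pi_pi {f : ℂ → E} {c : ℂ} {R : ℝ}
    (hf : CircleIntegrable f c R) :
    IntegrableOn (fun θ => f (circleMap c R θ)) (Ioo (-π) π) :=
  (((periodic_circleMap c R).comp f).intervalIntegrable₀ (by positivity) hf (-π) π).def'.mono_set
    (by rw [uIoc_of_le (by linarith [pi_pos])]; exact Ioo_subset_Ioc_self)

variable [NormedSpace ℝ E]

theorem integral_Ioo_neg_pi_pi_circleMap (f : ℂ → E) (c : ℂ) (R : ℝ) :
    ∫ θ in Ioo (-π) π, f (circleMap c R θ) = (2 * π) • circleAverage f c R := by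
  rw [circleAverage_eq_integral_add (-π), smul_inv_smul₀ (by positivity),
    intervalIntegral.integral_comp_add_right (fun θ => f (circleMap c R θ)), zero_add,
    show 2 * π + -π = π by ring, intervalIntegral.integral_of_le (by linarith [pi_pos]),
    integral_Ioc_eq_integral_Ioo]

theorem circleAverage_comp_ofReal_mul (f : ℂ → E) (a R : ℝ) :
    circleAverage (fun z => f (a * z)) 0 R = circleAverage f 0 (a * R) := by
  simp only [circleAverage, ofReal_mul_circleMap_zero]

theorem polarCoord_symm_eq_circleMap (p : ℝ × ℝ) :
    Complex.polarCoord.symm p = circleMap 0 p.1 p.2 := by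
  simp only [Complex.polarCoord_symm_apply, circleMap, zero_add, Complex.exp_mul_I]
  push_cast
  ring

theorem integral_ball_eq_integral_circleAverage {f : ℂ → E} {R : ℝ}
    (hf : IntegrableOn (fun p : ℝ × ℝ => p.1 • f (circleMap 0 p.1 p.2)) (Ioo 0 R ×ˢ Ioo (-π) π)) :
    ∫ z in ball (0 : ℂ) R, f z = (2 * π) • ∫ r in Ioo 0 R, r • circleAverage f 0 r := by
  have hpolar : ∫ z in ball (0 : ℂ) R, f z
      = ∫ p in Ioo 0 R ×ˢ Ioo (-π) π, p.1 • f (circleMap 0 p.1 p.2) := by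
    rw [← integral_indicator measurableSet_ball, ← Complex.integral_comp_polarCoord_symm,
      ← integral_indicator (measurableSet_Ioo.prod measurableSet_Ioo),
      ← integral_indicator polarCoord.open_target.measurableSet]
    congr 1 with ⟨r, θ⟩
    simp only [indicator, polarCoord_target, mem_prod, mem_Ioi, mem_Ioo, mem_ball_zero_iff,
      polarCoord_symm_eq_circleMap, norm_circleMap_zero]
    by_cases hr : 0 < r
    · by_cases hrR : r < R <;> simp [hr, hrR, abs_of_pos hr]
    · simp [hr]
  rw [IntegrableOn, Measure.volume_eq_prod, ← Measure.prod_restrict] at hf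
  rw [hpolar, Measure.volume_eq_prod, ← Measure.prod_restrict, integral_prod _ hf, ← integral_smul]
  refine setIntegral_congr_fun measurableSet_Ioo fun r _ => ?_
  rw [integral_smul, integral_Ioo_neg_pi_pi_circleMap, smul_comm]

end CircleAverage

theorem circleAverage_log_norm_sub_one (R : ℝ) :
    circleAverage (fun z => log ‖z - 1‖) 0 R = log⁺ R := by
  rcases eq_or_ne R 0 with rfl | hR
  · simp
  rw [circleAverage_log_norm_sub_const_eq_log_radius_add_posLog hR, zero_sub, norm_neg,
    norm_one, mul_one, ← posLog_sub_posLog_inv, sub_add_cancel]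

theorem circleAverage_abs_log_norm_sub_one_le (R : ℝ) :
    circleAverage (fun z => |log ‖z - 1‖|) 0 R ≤ 2 * log (1 + |R|) := by
  have habs : (fun z : ℂ => |log ‖z - 1‖|) = fun z => (2 : ℝ) • log⁺ ‖z - 1‖ - log ‖z - 1‖ := by
    ext z
    rw [posLog_apply, smul_eq_mul]
    rcases le_total 0 (log ‖z - 1‖) with h | h
    · rw [abs_of_nonneg h, max_eq_right h]; ring
    · rw [abs_of_nonpos h, max_eq_left h]; ring
  have hpos : CircleIntegrable (fun z : ℂ => log⁺ ‖z - 1‖) 0 R :=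
    MeromorphicOn.circleIntegrable_posLog_norm fun z _ => by fun_prop
  have hle : circleAverage (fun z : ℂ => log⁺ ‖z - 1‖) 0 R ≤ log (1 + |R|) := by
    refine circleAverage_mono_on_of_le_circle hpos fun z hz => ?_
    rw [mem_sphere_zero_iff_norm] at hz
    rw [← posLog_eq_log (by rw [abs_of_nonneg (by positivity)]; linarith [abs_nonneg R])]
    exact posLog_le_posLog (norm_nonneg _) ((norm_sub_le _ _).trans (by simp [hz, add_comm]))
  rw [habs, circleAverage_fun_sub (hpos.const_fun_smul (a := (2 : ℝ)))
    (circleIntegrable_log_norm_sub_const R), circleAverage_fun_smul, smul_eq_mul,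
    circleAverage_log_norm_sub_one]
  linarith [posLog_nonneg (x := R)]

theorem integral_Ioo_neg_pi_pi_abs_log_norm_circleMap_sub_one_le (R : ℝ) :
    ∫ θ in Ioo (-π) π, |log ‖circleMap 0 R θ - 1‖| ≤ 4 * π * log (1 + |R|) := by
  rw [integral_Ioo_neg_pi_pi_circleMap (fun z => |log ‖z - 1‖|), smul_eq_mul]
  nlinarith [circleAverage_abs_log_norm_sub_one_le R, pi_pos]

theorem integrable_rpow_mul_log_norm_circleMap_sub_one {α : ℝ} (hα : 0 < α) (a : ℝ) :
    Integrable (fun p : ℝ × ℝ => p.1 ^ (α - 1) * log ‖circleMap 0 (a * p.1) p.2 - 1‖)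
      ((volume.restrict (Ioo 0 1)).prod (volume.restrict (Ioo (-π) π))) := by
  have hmeas : AEStronglyMeasurable
      (fun p : ℝ × ℝ => p.1 ^ (α - 1) * log ‖circleMap 0 (a * p.1) p.2 - 1‖)
      ((volume.restrict (Ioo 0 1)).prod (volume.restrict (Ioo (-π) π))) := by
    unfold circleMap
    fun_prop
  refine (integrable_prod_iff hmeas).2 ⟨.of_forall fun r =>
    ((circleIntegrable_log_norm_sub_const (a := 1) (c := 0) (a * r)).integrableOn_Ioo_neg_pi_pi
      ).const_mul (r ^ (α - 1)), ?_⟩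
  refine Integrable.mono' (((intervalIntegral.integrableOn_Ioo_rpow_iff (s := α - 1)
    zero_lt_one).2 (by linarith)).const_mul (4 * π * log (1 + |a|)))
    hmeas.norm.integral_prod_right' ?_
  filter_upwards [ae_restrict_mem measurableSet_Ioo] with r hr
  have hr0 : 0 ≤ r ^ (α - 1) := rpow_nonneg hr.1.le _
  have har : |a * r| ≤ |a| := by
    rw [abs_mul, abs_of_pos hr.1]
    exact mul_le_of_le_one_right (abs_nonneg a) hr.2.le
  simp only [norm_mul, norm_of_nonneg hr0, Real.norm_eq_abs]
  rw [integral_const_mul, abs_of_nonneg (mul_nonneg hr0 (integral_nonneg fun _ => abs_nonneg _)),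
    mul_comm _ (r ^ (α - 1))]
  gcongr
  exact (integral_Ioo_neg_pi_pi_abs_log_norm_circleMap_sub_one_le _).trans (by gcongr)

theorem integral_ball_rpow_mul_log_norm_ofReal_mul_sub_one {α : ℝ} (hα : 0 < α) (a : ℝ) :
    ∫ z in ball (0 : ℂ) 1, ‖z‖ ^ (α - 2) * log ‖(a : ℂ) * z - 1‖
      = 2 * π * ∫ r in Ioo 0 1, r ^ (α - 1) * log⁺ (a * r) := by
  have hrpow : ∀ r : ℝ, 0 < r → r * r ^ (α - 2) = r ^ (α - 1) := fun r hr => by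
    rw [show α - 1 = 1 + (α - 2) by ring, rpow_add hr, rpow_one]
  have hint : IntegrableOn (fun p : ℝ × ℝ => p.1 • (‖circleMap 0 p.1 p.2‖ ^ (α - 2) *
      log ‖(a : ℂ) * circleMap 0 p.1 p.2 - 1‖)) (Ioo 0 1 ×ˢ Ioo (-π) π) := by
    rw [IntegrableOn, Measure.volume_eq_prod, ← Measure.prod_restrict]
    refine (integrable_rpow_mul_log_norm_circleMap_sub_one hα a).congr ?_
    rw [Measure.prod_restrict, ← Measure.volume_eq_prod]
    filter_upwards [ae_restrict_mem (measurableSet_Ioo.prod measurableSet_Ioo)]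
      with ⟨r, θ⟩ ⟨hr, _⟩
    simp only [smul_eq_mul, norm_circleMap_zero, abs_of_pos hr.1, ofReal_mul_circleMap_zero]
    rw [← mul_assoc, hrpow r hr.1]
  rw [integral_ball_eq_integral_circleAverage hint, smul_eq_mul]
  congr 1
  refine setIntegral_congr_fun measurableSet_Ioo fun r hr => ?_
  have hsphere : EqOn (fun z : ℂ => ‖z‖ ^ (α - 2) * log ‖(a : ℂ) * z - 1‖)
      (fun z => r ^ (α - 2) • log ‖(a : ℂ) * z - 1‖) (sphere 0 |r|) := by
    intro z hz
    rw [mem_sphere_zero_iff_norm, abs_of_pos hr.1] at hz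
    simp only [hz, smul_eq_mul]
  rw [circleAverage_congr_sphere hsphere, circleAverage_fun_smul,
    circleAverage_comp_ofReal_mul (fun z => log ‖z - 1‖), circleAverage_log_norm_sub_one,
    smul_eq_mul, smul_eq_mul, ← mul_assoc, hrpow r hr.1]

theorem hasDerivAt_rpow_div_mul_log_mul_sub {α a r : ℝ} (hα : α ≠ 0) (ha : a ≠ 0) (hr : 0 < r) :
    HasDerivAt (fun r => r ^ α / α * (log (a * r) - 1 / α)) (r ^ (α - 1) * log (a * r)) r := by
  have hpow := (hasDerivAt_rpow_const (p := α) (Or.inl hr.ne')).div_const α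
  have hlog := ((hasDerivAt_id r).const_mul a).log (mul_ne_zero ha hr.ne')
  refine (hpow.mul (hlog.sub_const (1 / α))).congr_deriv ?_
  rw [id, show r ^ α = r ^ (α - 1) * r by rw [← rpow_add_one hr.ne', sub_add_cancel]]
  field_simp
  ring

theorem integral_rpow_mul_posLog_mul_of_abs_le_one {α a : ℝ} (ha : |a| ≤ 1) :
    ∫ r in Ioo 0 1, r ^ (α - 1) * log⁺ (a * r) = 0 := by
  refine setIntegral_eq_zero_of_forall_eq_zero fun r hr => ?_
  rw [(posLog_eq_zero_iff _).2, mul_zero]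
  rw [abs_mul, abs_of_pos hr.1]
  exact mul_le_one₀ ha hr.1.le hr.2.le

theorem integral_rpow_mul_posLog_mul_of_one_lt {α a : ℝ} (hα : 0 < α) (ha : 1 < a) :
    ∫ r in Ioo 0 1, r ^ (α - 1) * log⁺ (a * r) = log a / α - (1 - a ^ (-α)) / α ^ 2 := by
  have ha0 : 0 < a := by linarith
  have hinv : a⁻¹ < 1 := inv_lt_one_of_one_lt₀ ha
  have hsupport : ∀ r ∈ Ioo (0 : ℝ) 1, r ^ (α - 1) * log⁺ (a * r)
      = (Ioo a⁻¹ 1).indicator (fun r => r ^ (α - 1) * log (a * r)) r := by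
    intro r hr
    rcases le_or_gt r a⁻¹ with h | h
    · rw [indicator_of_notMem (fun hm => h.not_gt hm.1), (posLog_eq_zero_iff _).2, mul_zero]
      rw [abs_of_pos (mul_pos ha0 hr.1)]
      exact (le_div_iff₀' ha0).1 (by rwa [one_div])
    · rw [indicator_of_mem (show r ∈ Ioo a⁻¹ 1 from ⟨h, hr.2⟩), posLog_eq_log]
      rw [abs_of_pos (mul_pos ha0 hr.1)]
      exact ((div_lt_iff₀' ha0).1 (by rwa [one_div])).le
  rw [setIntegral_congr_fun measurableSet_Ioo hsupport, setIntegral_indicator measurableSet_Ioo,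
    inter_eq_right.2 (Ioo_subset_Ioo_left (inv_pos.2 ha0).le), ← integral_Ioc_eq_integral_Ioo,
    ← intervalIntegral.integral_of_le hinv.le,
    intervalIntegral.integral_eq_sub_of_hasDerivAt (f := fun r => r ^ α / α * (log (a * r) - 1 / α))]
  · rw [mul_inv_cancel₀ ha0.ne', mul_one, one_rpow, log_one, inv_rpow ha0.le, ← rpow_neg ha0.le]
    field_simp
    ring
  · intro r hr
    rw [uIcc_of_le hinv.le] at hr
    exact hasDerivAt_rpow_div_mul_log_mul_sub hα.ne' ha0.ne' ((inv_pos.2 ha0).trans_le hr.1)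
  · refine ContinuousOn.intervalIntegrable fun r hr => ?_
    rw [uIcc_of_le hinv.le] at hr
    have hr0 : 0 < r := (inv_pos.2 ha0).trans_le hr.1
    exact ((continuousAt_rpow_const r _ (Or.inl hr0.ne')).mul
      ((continuousAt_log (mul_pos ha0 hr0).ne').comp (continuousAt_id.const_mul a))).continuousWithinAt

theorem stmt7 (D : ℕ) (hD : 1 ≤ D) (σ : ℝ) (hσ : 0 < σ) :
    (σ ≤ 1 →
      ∫ z in Metric.ball (0 : ℂ) 1,
          (‖z‖ ^ ((2 : ℝ) / D - 2) / (π * D)) *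
            Real.log ‖((σ ^ D : ℝ) : ℂ) * z - 1‖ = 0) ∧
    (1 < σ →
      ∫ z in Metric.ball (0 : ℂ) 1,
          (‖z‖ ^ ((2 : ℝ) / D - 2) / (π * D)) *
            Real.log ‖((σ ^ D : ℝ) : ℂ) * z - 1‖ =
        (D : ℝ) * (Real.log σ + (1 / σ ^ 2 - 1) / 2)) := by
  have hD0 : (0 : ℝ) < D := by exact_mod_cast hD
  have hα : (0 : ℝ) < 2 / D := by positivity
  have hreduce : ∫ z in ball (0 : ℂ) 1, (‖z‖ ^ ((2 : ℝ) / D - 2) / (π * D)) *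
      log ‖((σ ^ D : ℝ) : ℂ) * z - 1‖
      = 2 / D * ∫ r in Ioo 0 1, r ^ ((2 : ℝ) / D - 1) * log⁺ (σ ^ D * r) := by
    simp_rw [div_mul_eq_mul_div]
    rw [integral_div, integral_ball_rpow_mul_log_norm_ofReal_mul_sub_one hα]
    field_simp
  refine ⟨fun hσ1 => ?_, fun hσ1 => ?_⟩
  · have hσD : |σ ^ D| ≤ 1 := by
      rw [abs_of_pos (pow_pos hσ D)]
      exact pow_le_one₀ hσ.le hσ1
    rw [hreduce, integral_rpow_mul_posLog_mul_of_abs_le_one hσD, mul_zero]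
  · have hpow : (σ ^ D) ^ (-(2 / D : ℝ)) = (σ ^ 2)⁻¹ := by
      rw [← rpow_natCast σ D, ← rpow_mul hσ.le, mul_neg, mul_div_cancel₀ _ hD0.ne', rpow_neg hσ.le,
        rpow_two]
    rw [hreduce, integral_rpow_mul_posLog_mul_of_one_lt hα (one_lt_pow₀ hσ1 (by omega)), hpow,
      log_pow]
    field_simp
    ring
end

section
/- Fix natural numbers N ≥ 1 and D ≥ 1, and let μ be the probability measure on D-tuples (J_1, …, J_D) of real N × N matrices under which all N²·D entries are i.i.d. standard Gaussian random variables (mean 0, variance 1). Then for every real number c, ∫ |det(c·(J_1·J_2·⋯·J_D) − 1_N)| dμ ≥ 1. -/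
/-!
Write `J₁ ⋯ J_D = J₁ M` with `M` independent of `J₁`. The `i`-th row of `c J₁ M - 1` is an affine
function of the `i`-th row of `J₁` alone; since these rows are independent and centred, the
multilinearity of the determinant gives `E[det (c J₁ M - 1) | M] = det (-1) = (-1)^N`. Hence
`1 = |E det| ≤ E |det|`. The determinant is integrable because it is a polynomial in Gaussian
entries, and functions with finite moments of all orders form an algebra (Hölder).
-/

open MeasureTheory ProbabilityTheory Matrix
open scoped NNReal ENNReal

lemma ENNReal.holderTriple_two_mul (p : ℝ≥0) :
    ENNReal.HolderTriple ((2 * p : ℝ≥0) : ℝ≥0∞) ((2 * p : ℝ≥0) : ℝ≥0∞) p where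
  inv_add_inv_eq_inv := by
    push_cast
    rw [ENNReal.mul_inv (by simp) (by simp), ← two_mul, ← mul_assoc,
      ENNReal.mul_inv_cancel two_ne_zero ENNReal.ofNat_ne_top, one_mul]

section FiniteMoments

variable {Ω : Type*} [MeasurableSpace Ω]

def finiteMomentsSubalgebra (μ : Measure Ω) [IsFiniteMeasure μ] : Subalgebra ℝ (Ω → ℝ) where
  carrier := {f | ∀ p : ℝ≥0, MemLp f p μ}
  mul_mem' hf hg p :=
    have := ENNReal.holderTriple_two_mul p
    (hg (2 * p)).mul (hf (2 * p))
  add_mem' hf hg p := (hf p).add (hg p)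
  algebraMap_mem' r _ := memLp_const r

variable {μ : Measure Ω} [IsFiniteMeasure μ]

lemma integrable_of_mem_finiteMomentsSubalgebra {f : Ω → ℝ} (hf : f ∈ finiteMomentsSubalgebra μ) :
    Integrable f μ :=
  memLp_one_iff_integrable.mp (by exact_mod_cast hf 1)

lemma ProbabilityTheory.HasLaw.mem_finiteMomentsSubalgebra {X : Ω → ℝ} {m : ℝ} {v : ℝ≥0}
    (hX : HasLaw X (gaussianReal m v) μ) : X ∈ finiteMomentsSubalgebra μ := fun p =>
  (memLp_map_measure_iff aestronglyMeasurable_id hX.aemeasurable).1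
    (hX.map_eq ▸ memLp_id_gaussianReal p)

end FiniteMoments

section DeterminantMembership

variable {R n : Type*} [CommRing R] [Fintype n] [DecidableEq n]

lemma Subalgebra.det_mem {A : Type*} [CommRing A] [Algebra R A] (S : Subalgebra R A)
    {M : Matrix n n A} (hM : M ∈ S.matrix) : M.det ∈ S := by
  rw [det_apply]
  exact sum_mem fun σ _ => Subalgebra.zsmul_mem _ (prod_mem fun i _ => hM _ _) _

theorem det_smul_list_prod_sub_one_mem {Ω : Type*} (S : Subalgebra R (Ω → R)) {D : ℕ}
    (X : Fin D → Ω → Matrix n n R) (hX : ∀ d i j, (fun ω => X d ω i j) ∈ S) (c : R) :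
    (fun ω => (c • (List.ofFn fun d => X d ω).prod - 1).det) ∈ S := by
  set M : Fin D → Matrix n n (Ω → R) := fun d => of fun i j ω => X d ω i j
  have h_eval : (fun ω => (c • (List.ofFn fun d => X d ω).prod - 1).det)
      = (c • (List.ofFn M).prod - 1).det := by
    funext ω
    rw [← Pi.evalAlgHom_apply R (fun _ => R) ω (c • (List.ofFn M).prod - 1).det, AlgHom.map_det]
    simp only [map_sub, map_smul, map_one, map_list_prod, List.map_ofFn]
    rfl
  rw [h_eval]
  exact S.det_mem (sub_mem (Subalgebra.smul_mem _
    (list_prod_mem (S := S.matrix) (List.forall_mem_ofFn_iff.mpr fun d i j => hX d i j)) c)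
    (one_mem _))

end DeterminantMembership

section IndependentRows

variable {n α : Type*} [Fintype n] [DecidableEq n] [MeasurableSpace α]

theorem integral_det_pi_eq_det_integral {𝕜 : Type*} [RCLike 𝕜] (ρ : n → Measure α)
    [∀ i, SigmaFinite (ρ i)] (f : n → n → α → 𝕜) (hf : ∀ i j, Integrable (f i j) (ρ i)) :
    ∫ x, (of fun i j => f i j (x i)).det ∂Measure.pi ρ = (of fun i j => ∫ a, f i j a ∂ρ i).det := by
  have h_det (M : Matrix n n 𝕜) :
      M.det = ∑ σ : Equiv.Perm n, ((Equiv.Perm.sign σ : ℤ) : 𝕜) * ∏ i, M i (σ i) := by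
    rw [← det_transpose, det_apply']
    rfl
  simp_rw [h_det, of_apply]
  rw [integral_finsetSum _ fun σ _ => (Integrable.fintype_prod fun i => hf i (σ i)).const_mul _]
  refine Finset.sum_congr rfl fun σ _ => ?_
  rw [integral_const_mul, integral_fintype_prod_eq_prod (fun i => f i (σ i))]

theorem integral_det_smul_mul_sub_one (ρ : Measure (n → ℝ)) [IsProbabilityMeasure ρ]
    (h_int : ∀ l, Integrable (fun r => r l) ρ) (h_mean : ∀ l, ∫ r, r l ∂ρ = 0)
    (c : ℝ) (M : Matrix n n ℝ) :
    ∫ A, (c • (of A * M) - 1).det ∂Measure.pi (fun _ => ρ) = (-1) ^ Fintype.card n := by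
  have h_lin (j : n) : Integrable (fun r : n → ℝ => c * ∑ l, r l * M l j) ρ :=
    (integrable_finsetSum _ fun l _ => (h_int l).mul_const _).const_mul c
  have h_entry (A : n → n → ℝ) : c • (of A * M) - 1
      = of fun i j => c * ∑ l, A i l * M l j - (1 : Matrix n n ℝ) i j := by
    ext i j
    simp [mul_apply]
  have h_mean_entry (i j : n) :
      ∫ r, c * ∑ l, r l * M l j - (1 : Matrix n n ℝ) i j ∂ρ = (-1 : Matrix n n ℝ) i j := by
    rw [integral_sub (h_lin j) (integrable_const _), integral_const_mul,
      integral_finsetSum _ fun l _ => (h_int l).mul_const _]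
    simp [integral_mul_const, h_mean]
  simp_rw [h_entry]
  rw [integral_det_pi_eq_det_integral (fun _ => ρ)
    (fun i j r => c * ∑ l, r l * M l j - (1 : Matrix n n ℝ) i j)
    fun i j => (h_lin j).sub (integrable_const _)]
  simp_rw [h_mean_entry]
  exact (det_neg 1).trans (by simp)

end IndependentRows

theorem integral_pi_fin_succ {n : ℕ} {α : Fin (n + 1) → Type*} [∀ i, MeasurableSpace (α i)]
    {E : Type*} [NormedAddCommGroup E] [NormedSpace ℝ E]
    (ρ : ∀ i, Measure (α i)) [∀ i, SigmaFinite (ρ i)] {F : (∀ i, α i) → E}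
    (hF : Integrable F (Measure.pi ρ)) :
    ∫ x, F x ∂Measure.pi ρ = ∫ y, ∫ a, F (Fin.cons a y) ∂ρ 0 ∂Measure.pi fun i => ρ i.succ := by
  have h_split := (measurePreserving_piFinSuccAbove ρ 0).symm
  have hF_split : Integrable (fun z => F ((MeasurableEquiv.piFinSuccAbove α 0).symm z)) _ :=
    (h_split.integrable_comp_emb (MeasurableEquiv.measurableEmbedding _)).mpr hF
  rw [← h_split.integral_comp', integral_prod_symm _ hF_split]
  simp only [MeasurableEquiv.piFinSuccAbove_symm_apply, Fin.insertNthEquiv, Equiv.coe_fn_mk,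
    Fin.insertNth_zero]
  rfl

theorem stmt11_general (N D : ℕ) (hD : 1 ≤ D)
    (μ : Measure (Fin D → Fin N → Fin N → ℝ))
    (hμ : μ = Measure.pi fun _ : Fin D =>
      Measure.pi fun _ : Fin N => Measure.pi fun _ : Fin N => gaussianReal 0 1)
    (c : ℝ) :
    1 ≤ ∫ J : Fin D → Fin N → Fin N → ℝ,
          |(c • (List.ofFn fun d : Fin D => Matrix.of (J d)).prod -
              (1 : Matrix (Fin N) (Fin N) ℝ)).det| ∂μ := by
  obtain ⟨D, rfl⟩ := Nat.exists_eq_add_of_le' hD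
  have : IsProbabilityMeasure μ := hμ ▸ inferInstance
  have h_entry (d : Fin (D + 1)) (i j : Fin N) :
      HasLaw (fun J : Fin (D + 1) → Fin N → Fin N → ℝ => J d i j) (gaussianReal 0 1) μ :=
    hμ ▸ ((measurePreserving_eval (fun _ => gaussianReal 0 1) j).comp
      ((measurePreserving_eval (fun _ => Measure.pi fun _ => gaussianReal 0 1) i).comp
        (measurePreserving_eval _ d))).hasLaw
  have h_int := integrable_of_mem_finiteMomentsSubalgebra (det_smul_list_prod_sub_one_mem _
    (fun d (J : Fin (D + 1) → Fin N → Fin N → ℝ) => of (J d))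
    (fun d i j => (h_entry d i j).mem_finiteMomentsSubalgebra) c)
  have h_coord (l : Fin N) := (measurePreserving_eval (fun _ => gaussianReal 0 1) l).hasLaw
  have h_mean : ∫ J, (c • (List.ofFn fun d => of (J d)).prod - (1 : Matrix (Fin N) (Fin N) ℝ)).det ∂μ
      = (-1) ^ N := by
    rw [hμ] at h_int ⊢
    rw [integral_pi_fin_succ _ h_int]
    simp_rw [List.ofFn_succ, List.prod_cons, Fin.cons_zero, Fin.cons_succ]
    simp [integral_det_smul_mul_sub_one _
      (fun l => integrable_of_mem_finiteMomentsSubalgebra (h_coord l).mem_finiteMomentsSubalgebra)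
      (fun l => (h_coord l).integral_eq.trans integral_id_gaussianReal)]
  calc 1 = |∫ J, (c • (List.ofFn fun d => of (J d)).prod - (1 : Matrix (Fin N) (Fin N) ℝ)).det ∂μ|
        := by rw [h_mean]; simp
    _ ≤ _ := abs_integral_le_integral_abs

theorem stmt11 (N D : ℕ) (hN : 1 ≤ N) (hD : 1 ≤ D)
    (μ : Measure (Fin D → Fin N → Fin N → ℝ))
    (hμ : μ = Measure.pi fun _ : Fin D =>
      Measure.pi fun _ : Fin N => Measure.pi fun _ : Fin N => gaussianReal 0 1)
    (c : ℝ) :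
    1 ≤ ∫ J : Fin D → Fin N → Fin N → ℝ,
          |(c • (List.ofFn fun d : Fin D => Matrix.of (J d)).prod -
              (1 : Matrix (Fin N) (Fin N) ℝ)).det| ∂μ :=
  stmt11_general N D hD μ hμ c
end

section
/- For a natural number N ≥ 1 and a real σ > 0, define R_N(σ) = (1/(√(2π)·(N−1)!)) · [ ∫_{N/σ²}^∞ t^{N−1} e^{−t} dt + 2^{N/2 − 1} · (N/σ²)^{N/2} · e^{−N/(2σ²)} · ∫_0^{N/(2σ²)} t^{N/2 − 1} e^{−t} dt ]. Then for every fixed σ > 1, R_N(σ) tends to 1/√(2π) as N → ∞. -/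
open MeasureTheory Real Filter

noncomputable def ginibreRealDensity (N : ℕ) (σ : ℝ) : ℝ :=
  (1 / (Real.sqrt (2 * π) * (Nat.factorial (N - 1) : ℝ))) *
    ((∫ t in Set.Ioi ((N : ℝ) / σ ^ 2), t ^ ((N : ℝ) - 1) * Real.exp (-t)) +
      (2 : ℝ) ^ ((N : ℝ) / 2 - 1) * ((N : ℝ) / σ ^ 2) ^ ((N : ℝ) / 2) *
          Real.exp (-(N : ℝ) / (2 * σ ^ 2)) *
        ∫ t in Set.Ioo (0 : ℝ) ((N : ℝ) / (2 * σ ^ 2)), t ^ ((N : ℝ) / 2 - 1) * Real.exp (-t))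

/-!
Since `Γ(N, x) = (N - 1)! - γ(N, x)`, with `a = N / σ²` the quantity `√(2π) R_N(σ) - 1` is
`(T_N - γ(N, a)) / (N - 1)!`, where `T_N` is the second term of the bracket. The integrand
`t ^ (s - 1) * exp (-t)` increases on `(0, s - 1]`, so `γ(s, x) ≤ x ^ s * exp (-x)` for
`x ≤ s - 1`; this bounds both `γ(N, a)` and `T_N` by `a ^ N * exp (-a)` once `a ≤ N - 2`.
Writing `a = N c` with `c = σ⁻² < 1`, the bound `N ^ N ≤ exp N * N !` gives
`a ^ N * exp (-a) / (N - 1)! ≤ N (c * exp (1 - c)) ^ N`, which tends to `0` because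
`c * exp (1 - c) < 1` for `c ≠ 1`.
-/

open Set Nat

noncomputable def lowerIncompleteGamma (s x : ℝ) : ℝ :=
  ∫ t in Ioo 0 x, t ^ (s - 1) * exp (-t)

noncomputable def upperIncompleteGamma (s x : ℝ) : ℝ :=
  ∫ t in Ioi x, t ^ (s - 1) * exp (-t)

lemma rpow_mul_exp_neg_le {t a c : ℝ} (ht : 0 < t) (hta : t ≤ a) (hac : a ≤ c) :
    t ^ c * exp (-t) ≤ a ^ c * exp (-a) := by
  have ha : 0 < a := ht.trans_le hta
  have hlog : a - t ≤ c * (log a - log t) :=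
    calc a - t = a * (1 - (a / t)⁻¹) := by field_simp
      _ ≤ c * (1 - (a / t)⁻¹) := by
        gcongr
        rw [sub_nonneg, inv_div, div_le_one ha]
        exact hta
      _ ≤ c * (log a - log t) := by
        rw [← log_div ha.ne' ht.ne']
        gcongr
        · exact ha.le.trans hac
        · exact one_sub_inv_le_log_of_pos (by positivity)
  rw [rpow_def_of_pos ht, rpow_def_of_pos ha, ← exp_add, ← exp_add, exp_le_exp]
  linarith

lemma lowerIncompleteGamma_nonneg (s x : ℝ) : 0 ≤ lowerIncompleteGamma s x :=
  setIntegral_nonneg measurableSet_Ioo fun t ht => by have := ht.1; positivity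

lemma lowerIncompleteGamma_le {s x : ℝ} (hx : 0 < x) (hxs : x ≤ s - 1) :
    lowerIncompleteGamma s x ≤ x ^ s * exp (-x) := by
  have hbound : ‖lowerIncompleteGamma s x‖ ≤ x ^ (s - 1) * exp (-x) * volume.real (Ioo 0 x) :=
    norm_setIntegral_le_of_norm_le_const measure_Ioo_lt_top fun t ht => by
      have := ht.1
      rw [norm_of_nonneg (by positivity)]
      exact rpow_mul_exp_neg_le ht.1 ht.2.le hxs
  rw [Real.volume_real_Ioo_of_le hx.le, sub_zero, rpow_sub_one hx.ne'] at hbound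
  calc lowerIncompleteGamma s x ≤ ‖lowerIncompleteGamma s x‖ := le_norm_self _
    _ ≤ x ^ s / x * exp (-x) * x := hbound
    _ = x ^ s * exp (-x) := by field_simp

lemma upperIncompleteGamma_eq_Gamma_sub {s x : ℝ} (hs : 0 < s) (hx : 0 ≤ x) :
    upperIncompleteGamma s x = Gamma s - lowerIncompleteGamma s x := by
  have hint : IntegrableOn (fun t : ℝ => t ^ (s - 1) * exp (-t)) (Ioi 0) := by
    simpa only [mul_comm] using GammaIntegral_convergent hs
  have hsplit := setIntegral_union (Ioc_disjoint_Ioi le_rfl) measurableSet_Ioi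
    (hint.mono_set Ioc_subset_Ioi_self) (hint.mono_set (Ioi_subset_Ioi hx))
  rw [Ioc_union_Ioi_eq_Ioi hx, integral_Ioc_eq_integral_Ioo] at hsplit
  rw [Gamma_eq_integral hs, lowerIncompleteGamma, upperIncompleteGamma]
  simp only [mul_comm (exp _)]
  linarith

lemma mul_exp_one_sub_lt_one {c : ℝ} (hc : c ≠ 1) : c * exp (1 - c) < 1 := by
  have h := add_one_lt_exp (sub_ne_zero.mpr hc)
  calc c * exp (1 - c) < exp (c - 1) * exp (1 - c) := by gcongr; linarith
    _ = 1 := by rw [← exp_add, sub_add_sub_cancel', sub_self, exp_zero]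

lemma mul_pow_mul_exp_neg_div_factorial_le {N : ℕ} (hN : N ≠ 0) {c : ℝ} (hc : 0 ≤ c) :
    (N * c) ^ N * exp (-(N * c)) / (N - 1)! ≤ N * (c * exp (1 - c)) ^ N := by
  have hstirling : (N : ℝ) ^ N ≤ exp N * N ! :=
    (div_le_iff₀ (by positivity)).mp (Real.pow_div_factorial_le_exp _ N.cast_nonneg N)
  have hfact : (N ! : ℝ) = N * (N - 1)! := by exact_mod_cast (mul_factorial_pred hN).symm
  rw [div_le_iff₀ (by positivity), mul_pow, mul_pow, ← exp_nat_mul]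
  calc (N : ℝ) ^ N * c ^ N * exp (-(N * c)) ≤ exp N * N ! * c ^ N * exp (-(N * c)) := by
        gcongr
    _ = N * (c ^ N * exp (N * (1 - c))) * (N - 1)! := by
        rw [hfact, mul_one_sub, sub_eq_add_neg, exp_add]; ring

lemma rpow_mul_lowerIncompleteGamma_half_le {s a : ℝ} (ha : 0 < a) (has : a / 2 ≤ s - 1) :
    2 ^ (s - 1) * a ^ s * exp (-(a / 2)) * lowerIncompleteGamma s (a / 2) ≤
      a ^ (2 * s) * exp (-a) / 2 := by
  calc 2 ^ (s - 1) * a ^ s * exp (-(a / 2)) * lowerIncompleteGamma s (a / 2)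
      ≤ 2 ^ (s - 1) * a ^ s * exp (-(a / 2)) * ((a / 2) ^ s * exp (-(a / 2))) := by
        gcongr
        exact lowerIncompleteGamma_le (by positivity) has
    _ = a ^ (2 * s) * exp (-a) / 2 := by
        have hexp : exp (-a) = exp (-(a / 2)) * exp (-(a / 2)) := by rw [← exp_add]; ring_nf
        rw [div_rpow ha.le zero_le_two, rpow_sub_one two_ne_zero, two_mul, rpow_add ha, hexp]
        field_simp

lemma ginibreRealDensity_eq (N : ℕ) (σ : ℝ) :
    ginibreRealDensity N σ =
      (upperIncompleteGamma N (N / σ ^ 2) +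
        2 ^ ((N : ℝ) / 2 - 1) * (N / σ ^ 2) ^ ((N : ℝ) / 2) * exp (-(N / σ ^ 2 / 2)) *
          lowerIncompleteGamma (N / 2) (N / σ ^ 2 / 2)) /
        (√(2 * π) * (N - 1)!) := by
  rw [ginibreRealDensity, one_div_mul_eq_div, neg_div, div_div _ (σ ^ 2), mul_comm (σ ^ 2)]
  rfl

lemma abs_ginibreRealDensity_sub_le {N : ℕ} {σ : ℝ} (hpos : 0 < N / σ ^ 2)
    (hle : N / σ ^ 2 ≤ N - 2) :
    |ginibreRealDensity N σ - 1 / √(2 * π)| ≤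
      (N / σ ^ 2) ^ N * exp (-(N / σ ^ 2)) / (N - 1)! / √(2 * π) := by
  have hN : N ≠ 0 := by rintro rfl; simp at hpos
  have hGamma : Gamma N = (N - 1)! := by
    rw [← Gamma_nat_eq_factorial, Nat.cast_pred (pos_of_ne_zero hN), sub_add_cancel]
  rw [ginibreRealDensity_eq, upperIncompleteGamma_eq_Gamma_sub (by positivity) hpos.le, hGamma]
  set a : ℝ := N / σ ^ 2
  set T := 2 ^ ((N : ℝ) / 2 - 1) * a ^ ((N : ℝ) / 2) * exp (-(a / 2)) *
    lowerIncompleteGamma (N / 2) (a / 2)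
  have hfirst : lowerIncompleteGamma N a ≤ a ^ N * exp (-a) := by
    simpa only [rpow_natCast] using lowerIncompleteGamma_le (s := N) hpos (by linarith)
  have hsecond : T ≤ a ^ N * exp (-a) / 2 := by
    simpa only [mul_div_cancel₀ (N : ℝ) two_ne_zero, rpow_natCast] using
      rpow_mul_lowerIncompleteGamma_half_le (s := N / 2) hpos (by linarith)
  have hT : 0 ≤ T := by
    have := lowerIncompleteGamma_nonneg (N / 2) (a / 2)
    positivity
  have hdiff : |T - lowerIncompleteGamma N a| ≤ a ^ N * exp (-a) := by
    have := lowerIncompleteGamma_nonneg N a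
    exact abs_sub_le_iff.mpr ⟨by linarith, by linarith⟩
  have hsplit :
      ((N - 1)! - lowerIncompleteGamma N a + T) / (√(2 * π) * (N - 1)!) - 1 / √(2 * π) =
        (T - lowerIncompleteGamma N a) / (N - 1)! / √(2 * π) := by
    field_simp
    ring
  rw [hsplit, abs_div, abs_div, abs_of_pos (by positivity : (0 : ℝ) < (N - 1)!),
    abs_of_pos (by positivity : 0 < √(2 * π))]
  gcongr

theorem stmt14 (σ : ℝ) (hσ : 1 < σ) :
    Filter.Tendsto (fun N : ℕ => ginibreRealDensity N σ) Filter.atTop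
      (nhds (1 / Real.sqrt (2 * π))) := by
  set c := (σ ^ 2)⁻¹
  have hc : 0 < c := by positivity
  have hc1 : c < 1 := inv_lt_one_of_one_lt₀ (one_lt_pow₀ hσ two_ne_zero)
  have hdecay :
      Tendsto (fun N : ℕ => N * (c * exp (1 - c)) ^ N / √(2 * π)) atTop (nhds 0) := by
    simpa using (tendsto_self_mul_const_pow_of_lt_one (by positivity)
      (mul_exp_one_sub_lt_one hc1.ne)).div_const √(2 * π)
  have hlarge : ∀ᶠ N : ℕ in atTop, 2 ≤ N * (1 - c) :=
    (tendsto_natCast_atTop_atTop.atTop_mul_const (sub_pos.mpr hc1)).eventually_ge_atTop 2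
  rw [tendsto_iff_norm_sub_tendsto_zero]
  refine squeeze_zero' (.of_forall fun _ => norm_nonneg _) ?_ hdecay
  filter_upwards [hlarge, eventually_ne_atTop 0] with N hN hN0
  have ha : (N : ℝ) / σ ^ 2 = N * c := div_eq_mul_inv _ _
  calc ‖ginibreRealDensity N σ - 1 / √(2 * π)‖
      ≤ (N / σ ^ 2) ^ N * exp (-(N / σ ^ 2)) / (N - 1)! / √(2 * π) :=
        abs_ginibreRealDensity_sub_le (by positivity) (by rw [ha]; linarith)
    _ ≤ N * (c * exp (1 - c)) ^ N / √(2 * π) := by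
        rw [ha]
        gcongr
        exact mul_pow_mul_exp_neg_div_factorial_le hN0 hc.le
end
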